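/- Let L be a finite-dimensional simple Lie superalgebra over 𝔽, M = L* its dual module, ψ : L → L* a superderivation with canonical extension Ψ : U(L)⁺ → L*, and let x ∈ L_{0̄} be an even element such that x^{p^t} (the p^t-th power in U(L)) is central in U(L)⁺. Then x^{p^t − 1} · ψ(x) = 0. -/

import Mathlib

/-! Write `X = ι x`, `A = ad x` and `D = σ X` for the coadjoint action of `x`. Since `X^{p^t}`
is central, Frobenius gives `(ad X)^{p^t} = 0` on `U`, hence `ι ∘ A^{p^t} = 0`. A homogeneous
element killed by `ι` acts trivially on `L*`, so it is central in `L` and vanishes by simplicity;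
thus `A^{p^t} = 0`, and `D^{p^t} = 0` as well.

The superderivation rule at `x` reads `σ(ι u) ψ(x) = ±(Tψ)(u)` for the operator
`T χ = D ∘ χ - χ ∘ A` on `Hom(L, L*)`, and moving `ι u` past powers of `X` upgrades this to
`σ(ι u) D^k ψ(x) = ±(T^{k+1} ψ)(u)`. By Frobenius once more `T^{p^t} χ = D^{p^t} ∘ χ - χ ∘ A^{p^t}
= 0`, so `D^{p^t-1} ψ(x)` is a homogeneous `L`-invariant functional; it kills `[L, L] = L`. -/

/-- The sign `(-1)^a` for a parity `a : ZMod 2`. -/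
def sgn (F : Type*) [Ring F] (a : ZMod 2) : F := if a = 0 then 1 else -1

open Module

section Sign

variable {F : Type*} [Ring F]

lemma sgn_mul_self (a : ZMod 2) : sgn F a * sgn F a = 1 := by
  unfold sgn; split <;> simp

@[simp] lemma sgn_zero : sgn F 0 = 1 := if_pos rfl

lemma sgn_ne_zero [Nontrivial F] (a : ZMod 2) : sgn F a ≠ 0 := by
  unfold sgn; split <;> simp

end Sign

theorem Commute.sub_pow_char_pow_of_algebra {R A : Type*} [CommRing R] [Ring A] [Algebra R A]
    {p : ℕ} (hp : p.Prime) [CharP R p] {x y : A} (h : Commute x y) (n : ℕ) :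
    (x - y) ^ p ^ n = x ^ p ^ n - y ^ p ^ n := by
  have := Fact.mk hp
  cases subsingleton_or_nontrivial A
  · exact Subsingleton.elim _ _
  · have : CharP A p := (CharP.charP_iff_prime_eq_zero hp).2 <| by
      rw [← map_natCast (algebraMap R A), CharP.cast_eq_zero, map_zero]
    exact _root_.sub_pow_char_pow_of_commute p n h

namespace LinearMap

variable {R L M : Type*} [CommRing R] [AddCommGroup L] [Module R L] [AddCommGroup M] [Module R M]

def homAction (D : Module.End R M) (A : Module.End R L) : Module.End R (L →ₗ[R] M) :=
  compRight R D - lcomp R M A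

@[simp] lemma homAction_apply (D : Module.End R M) (A : Module.End R L) (χ : L →ₗ[R] M)
    (u : L) : homAction D A χ u = D (χ u) - χ (A u) := rfl

lemma compRight_pow (D : Module.End R M) (n : ℕ) :
    (compRight R D : Module.End R (L →ₗ[R] M)) ^ n = compRight R (D ^ n) := by
  induction n with
  | zero => ext; simp
  | succ n ih => ext; simp [pow_succ, ih]

lemma lcomp_pow (A : Module.End R L) (n : ℕ) :
    lcomp R M A ^ n = lcomp R M (A ^ n) := by
  induction n with
  | zero => ext; simp
  | succ n ih => rw [pow_succ, ih]; ext; simp [pow_succ']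

lemma homAction_pow_char {p : ℕ} (hp : p.Prime) [CharP R p] (D : Module.End R M)
    (A : Module.End R L) (n : ℕ) :
    homAction D A ^ p ^ n = homAction (D ^ p ^ n) (A ^ p ^ n) := by
  rw [homAction, Commute.sub_pow_char_pow_of_algebra (R := R) hp (by ext; rfl), compRight_pow,
    lcomp_pow]
  rfl

end LinearMap

lemma mulLeft_sub_mulRight_pow_char_eq_zero {R U : Type*} [CommRing R] [Ring U] [Algebra R U]
    {p : ℕ} (hp : p.Prime) [CharP R p] {X : U} {n : ℕ} (hX : ∀ u, X ^ p ^ n * u = u * X ^ p ^ n) :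
    (LinearMap.mulLeft R X - LinearMap.mulRight R X) ^ p ^ n = 0 := by
  rw [(LinearMap.commute_mulLeft_right X X).sub_pow_char_pow_of_algebra (R := R) hp,
    LinearMap.pow_mulLeft, LinearMap.pow_mulRight]
  ext u
  simp [hX u]

theorem AlgHom.apply_pow_apply_eq_homAction_pow_apply {R U L M : Type*} [CommRing R] [Ring U]
    [Algebra R U] [AddCommGroup L] [Module R L] [AddCommGroup M] [Module R M]
    (σ : U →ₐ[R] Module.End R M) (ι : L →ₗ[R] U) {X : U} {A : Module.End R L} {P : Set L}
    (hAP : Set.MapsTo A P P) (hcomm : ∀ u ∈ P, ι (A u) = X * ι u - ι u * X) {m : M}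
    {χ : L →ₗ[R] M} (hχ : ∀ u ∈ P, σ (ι u) m = χ u) (k : ℕ) :
    ∀ u ∈ P, σ (ι u) ((σ X ^ k) m) = (LinearMap.homAction (σ X) A ^ k) χ u := by
  induction k with
  | zero => simpa using hχ
  | succ k ih =>
    intro u hu
    have hswap : ι u * X = X * ι u - ι (A u) := by rw [hcomm u hu]; abel
    rw [pow_succ', pow_succ', Module.End.mul_apply, Module.End.mul_apply,
      ← Module.End.mul_apply (σ (ι u)), ← map_mul, hswap, map_sub, LinearMap.sub_apply, map_mul,
      Module.End.mul_apply, ih u hu, ih _ (hAP hu), LinearMap.homAction_apply]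

lemma DirectSum.IsInternal.linearMap_ext {ι R M N : Type*} [DecidableEq ι] [Ring R]
    [AddCommGroup M] [Module R M] [AddCommGroup N] [Module R N] {g : ι → Submodule R M}
    (hg : DirectSum.IsInternal g) {f f' : M →ₗ[R] N} (h : ∀ i, ∀ u ∈ g i, f u = f' u) :
    f = f' := by
  refine sub_eq_zero.1 <| LinearMap.ker_eq_top.1 <| eq_top_iff.2 ?_
  rw [← hg.submodule_iSup_eq_top]
  exact iSup_le fun i u hu => by simp [h i u hu]

section ZModTwoGrading

variable {F L : Type*} [Field F] [AddCommGroup L] [Module F L] {g : ZMod 2 → Submodule F L}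
  {br : L →ₗ[F] L →ₗ[F] L}

lemma DirectSum.IsInternal.dual_linearMap_ext {N : Type*} [AddCommGroup N] [Module F N]
    (hg : DirectSum.IsInternal g) {Φ Φ' : Dual F L →ₗ[F] N}
    (h : ∀ b : ZMod 2, ∀ f ∈ (g (b + 1)).dualAnnihilator, Φ f = Φ' f) : Φ = Φ' := by
  have hc : IsCompl (g 0) (g 1) := hg.isCompl (by decide) (Set.eq_univ_of_forall (by decide)).symm
  ext1 f
  have hf : f = f ∘ₗ (g 0).projection (g 1) hc + f ∘ₗ (g 1).projection (g 0) hc.symm := by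
    ext u; simp [← map_add, Submodule.projection_add_projection_eq_self]
  have h₀ : f ∘ₗ (g 0).projection (g 1) hc ∈ (g (0 + 1)).dualAnnihilator :=
    (Submodule.mem_dualAnnihilator _).2 fun y hy => by
      simp [Submodule.projection_apply_of_mem_right hc (by simpa using hy)]
  have h₁ : f ∘ₗ (g 1).projection (g 0) hc.symm ∈ (g (1 + 1)).dualAnnihilator := by
    rw [show (1 + 1 : ZMod 2) = 0 by decide]
    exact (Submodule.mem_dualAnnihilator _).2 fun y hy => by
      simp [Submodule.projection_apply_of_mem_right hc.symm hy]
  rw [hf, map_add, map_add, h 0 _ h₀, h 1 _ h₁]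

variable (g br) in
/-- `f ∈ (g (b + 1)).dualAnnihilator` says that `f ∈ L*` is homogeneous of parity `b`. -/
def IsCoadjointAction (a : ZMod 2) (w : L) (Φ : Module.End F (Dual F L)) : Prop :=
  ∀ b : ZMod 2, ∀ f ∈ (g (b + 1)).dualAnnihilator, ∀ y : L, Φ f y = -sgn F (a * b) * f (br w y)

lemma mapsTo_bracket_of_mem_zero
    (hbrg : ∀ a b : ZMod 2, ∀ x ∈ g a, ∀ y ∈ g b, br x y ∈ g (a + b))
    {x : L} (hx : x ∈ g 0) (b : ZMod 2) : Set.MapsTo (br x) (g b) (g b) :=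
  fun y hy => by simpa using hbrg 0 b x hx y hy

namespace IsCoadjointAction

variable {a : ZMod 2} {w : L} {Φ : Module.End F (Dual F L)}

lemma eq_lcomp_neg (hg : DirectSum.IsInternal g) (h : IsCoadjointAction g br 0 w Φ) :
    Φ = LinearMap.lcomp F F (-br w) :=
  hg.dual_linearMap_ext fun b f hf => by ext y; simp [h b f hf y]

lemma mapsTo_dualAnnihilator
    (hbrg : ∀ a b : ZMod 2, ∀ x ∈ g a, ∀ y ∈ g b, br x y ∈ g (a + b))
    (hw : w ∈ g 0) (h : IsCoadjointAction g br 0 w Φ) (b : ZMod 2) :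
    Set.MapsTo Φ (g (b + 1)).dualAnnihilator (g (b + 1)).dualAnnihilator := fun f hf =>
  (Submodule.mem_dualAnnihilator _).2 fun y hy => by
    rw [h b f hf y,
      (Submodule.mem_dualAnnihilator f).1 hf _ (mapsTo_bracket_of_mem_zero hbrg hw _ hy), mul_zero]

lemma comp_bracket_eq_zero (h : IsCoadjointAction g br a w Φ) {b : ZMod 2} {f : Dual F L}
    (hf : f ∈ (g (b + 1)).dualAnnihilator) (hΦf : Φ f = 0) : f ∘ₗ br w = 0 := by
  ext y
  have := h b f hf y
  rw [hΦf, LinearMap.zero_apply, eq_comm, mul_eq_zero, neg_eq_zero] at this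
  exact this.resolve_left (sgn_ne_zero _)

lemma bracket_eq_zero (hg : DirectSum.IsInternal g) (h : IsCoadjointAction g br a w 0) :
    br w = 0 := by
  ext y
  have : Dual.eval F L (br w y) = 0 := hg.dual_linearMap_ext fun b f hf =>
    LinearMap.congr_fun (h.comp_bracket_eq_zero hf rfl) y
  exact (eval_apply_eq_zero_iff F (br w y)).1 this

end IsCoadjointAction

lemma eq_zero_of_forall_bracket_eq_zero
    (hsimple : ∀ I : Submodule F L, (∀ x y : L, y ∈ I → br x y ∈ I) → I = ⊥ ∨ I = ⊤)
    (hnonab : br ≠ 0) {w : L} (h : ∀ y, br y w = 0) : w = 0 := by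
  let Z : Submodule F L := ⨅ y, LinearMap.ker (br y)
  have hmem : ∀ v, v ∈ Z ↔ ∀ y, br y v = 0 := by simp [Z]
  rcases hsimple Z fun y v hv => by simp [(hmem v).1 hv y] with hZ | hZ
  · simpa [hZ] using (hmem w).2 h
  · exact absurd (LinearMap.ext fun y => LinearMap.ext fun v => (hmem v).1 (hZ ▸ trivial) y) hnonab

lemma eq_zero_of_forall_apply_bracket_eq_zero {N : Type*} [AddCommGroup N] [Module F N]
    (hsimple : ∀ I : Submodule F L, (∀ x y : L, y ∈ I → br x y ∈ I) → I = ⊥ ∨ I = ⊤)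
    (hnonab : br ≠ 0) {E : L →ₗ[F] N} (h : ∀ u v, E (br u v) = 0) : E = 0 := by
  let I : Submodule F L := ⨆ u, LinearMap.range (br u)
  have hI : I = ⊤ := by
    refine (hsimple I fun u v _ => Submodule.mem_iSup_of_mem u ⟨v, rfl⟩).resolve_left fun hI => ?_
    refine hnonab (LinearMap.ext fun u => LinearMap.ext fun v => ?_)
    have : br u v ∈ I := Submodule.mem_iSup_of_mem u ⟨v, rfl⟩
    simpa [hI] using this
  refine LinearMap.ker_eq_top.1 (top_le_iff.1 (hI ▸ iSup_le fun u => ?_))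
  rintro _ ⟨v, rfl⟩
  exact h u v

lemma eq_zero_of_isCoadjointAction_zero (hg : DirectSum.IsInternal g)
    (hskew : ∀ a b : ZMod 2, ∀ x ∈ g a, ∀ y ∈ g b, br x y = - sgn F (a * b) • br y x)
    (hsimple : ∀ I : Submodule F L, (∀ x y : L, y ∈ I → br x y ∈ I) → I = ⊥ ∨ I = ⊤)
    (hnonab : br ≠ 0) {a : ZMod 2} {w : L} (hw : w ∈ g a) (h : IsCoadjointAction g br a w 0) :
    w = 0 := by
  have hbr : br w = 0 := h.bracket_eq_zero hg
  refine eq_zero_of_forall_bracket_eq_zero hsimple hnonab fun y => ?_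
  have : br.flip w = 0 := hg.linearMap_ext fun b y hy => by simp [hskew b a y hy w hw, hbr]
  exact LinearMap.congr_fun this y


lemma eq_zero_of_forall_coadjoint_apply_eq_zero (hg : DirectSum.IsInternal g)
    (hsimple : ∀ I : Submodule F L, (∀ x y : L, y ∈ I → br x y ∈ I) → I = ⊥ ∨ I = ⊤)
    (hnonab : br ≠ 0) {Φ : L → Module.End F (Dual F L)}
    (hΦ : ∀ a, ∀ u ∈ g a, IsCoadjointAction g br a u (Φ u)) {b : ZMod 2} {f : Dual F L}
    (hf : f ∈ (g (b + 1)).dualAnnihilator) (h : ∀ a, ∀ u ∈ g a, Φ u f = 0) : f = 0 := by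
  have : br.compr₂ f = 0 :=
    hg.linearMap_ext fun a u hu => (hΦ a u hu).comp_bracket_eq_zero hf (h a u hu)
  exact eq_zero_of_forall_apply_bracket_eq_zero hsimple hnonab fun u v =>
    LinearMap.congr_fun (LinearMap.congr_fun this u) v

lemma map_bracket_of_mem_zero {U : Type*} [Ring U] [Algebra F U] {ι : L →ₗ[F] U}
    (hι : ∀ a b : ZMod 2, ∀ x ∈ g a, ∀ y ∈ g b,
      ι (br x y) = ι x * ι y - sgn F (a * b) • (ι y * ι x))
    {x : L} (hx : x ∈ g 0) {b : ZMod 2} {u : L} (hu : u ∈ g b) :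
    ι (br x u) = ι x * ι u - ι u * ι x := by
  simpa using hι 0 b x hx u hu

theorem bracket_pow_char_eq_zero_of_central {U : Type*} [Ring U] [Algebra F U] {p : ℕ}
    (hp : p.Prime) [CharP F p] (hg : DirectSum.IsInternal g)
    (hbrg : ∀ a b : ZMod 2, ∀ x ∈ g a, ∀ y ∈ g b, br x y ∈ g (a + b))
    (hskew : ∀ a b : ZMod 2, ∀ x ∈ g a, ∀ y ∈ g b, br x y = - sgn F (a * b) • br y x)
    (hsimple : ∀ I : Submodule F L, (∀ x y : L, y ∈ I → br x y ∈ I) → I = ⊥ ∨ I = ⊤)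
    (hnonab : br ≠ 0) {ι : L →ₗ[F] U}
    (hι : ∀ a b : ZMod 2, ∀ x ∈ g a, ∀ y ∈ g b,
      ι (br x y) = ι x * ι y - sgn F (a * b) • (ι y * ι x))
    {σ : U →ₐ[F] Module.End F (Dual F L)}
    (hσ : ∀ a, ∀ u ∈ g a, IsCoadjointAction g br a u (σ (ι u)))
    {x : L} (hx : x ∈ g 0) {t : ℕ} (hcentral : ∀ u : U, ι x ^ p ^ t * u = u * ι x ^ p ^ t) :
    br x ^ p ^ t = 0 := by
  have hιA : (LinearMap.mulLeft F (ι x) - LinearMap.mulRight F (ι x)) ∘ₗ ι = ι ∘ₗ br x :=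
    hg.linearMap_ext fun b u hu => by simp [map_bracket_of_mem_zero hι hx hu]
  have hιAq : ι ∘ₗ br x ^ p ^ t = 0 := by
    rw [← Module.End.commute_pow_left_of_commute hιA,
      mulLeft_sub_mulRight_pow_char_eq_zero hp hcentral, LinearMap.zero_comp]
  refine hg.linearMap_ext fun b u hu => ?_
  have hw : (br x ^ p ^ t) u ∈ g b := by
    rw [Module.End.coe_pow]
    exact (mapsTo_bracket_of_mem_zero hbrg hx b).iterate _ hu
  refine eq_zero_of_isCoadjointAction_zero hg hskew hsimple hnonab hw ?_
  have hιw : ι ((br x ^ p ^ t) u) = 0 := LinearMap.congr_fun hιAq u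
  simpa [hιw] using hσ b _ hw

lemma apply_eq_sgn_smul_homAction {M : Type*} [AddCommGroup M] [Module F M]
    (hskew : ∀ a b : ZMod 2, ∀ x ∈ g a, ∀ y ∈ g b, br x y = - sgn F (a * b) • br y x)
    (ρ : L → Module.End F M) (pψ : ZMod 2) {ψ : L →ₗ[F] M}
    (hLeib : ∀ a b : ZMod 2, ∀ x ∈ g a, ∀ y ∈ g b,
      ψ (br x y) = sgn F (pψ * a) • ρ x (ψ y) - sgn F ((pψ + a) * b) • ρ y (ψ x))
    {x : L} (hx : x ∈ g 0) {b : ZMod 2} {u : L} (hu : u ∈ g b) :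
    ρ u (ψ x) = (sgn F (pψ * b) • LinearMap.homAction (ρ x) (br x) ψ) u := by
  have h := hLeib b 0 u hu x hx
  rw [hskew b 0 u hu x hx] at h
  simp only [mul_zero, sgn_zero, neg_smul, one_smul, map_neg] at h
  have hT : LinearMap.homAction (ρ x) (br x) ψ u = sgn F (pψ * b) • ρ u (ψ x) := by
    rw [LinearMap.homAction_apply, ← neg_neg (ψ (br x u)), h]
    abel
  rw [LinearMap.smul_apply, hT, smul_smul, sgn_mul_self, one_smul]

end ZModTwoGrading

theorem stmt7_general (p t : ℕ) (hp : p.Prime)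
    (F : Type*) [Field F] [CharP F p]
    (L : Type*) [AddCommGroup L] [Module F L]
    (U : Type*) [Ring U] [Algebra F U]
    (g : ZMod 2 → Submodule F L) (br : L →ₗ[F] L →ₗ[F] L)
    (hg : DirectSum.IsInternal g)
    (hbrg : ∀ a b : ZMod 2, ∀ x ∈ g a, ∀ y ∈ g b, br x y ∈ g (a + b))
    (hskew : ∀ a b : ZMod 2, ∀ x ∈ g a, ∀ y ∈ g b,
      br x y = - sgn F (a * b) • br y x)
    (hsimple : ∀ I : Submodule F L, (∀ x y : L, y ∈ I → br x y ∈ I) → I = ⊥ ∨ I = ⊤)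
    (hnonab : br ≠ 0)
    -- `(U, ι)` is the universal enveloping algebra of `L`:
    (ι : L →ₗ[F] U)
    (hι : ∀ a b : ZMod 2, ∀ x ∈ g a, ∀ y ∈ g b,
      ι (br x y) = ι x * ι y - sgn F (a * b) • (ι y * ι x))
    -- the dual module `L*` is a `U`-module restricting to the coadjoint action:
    (σ : U →ₐ[F] Module.End F (Module.Dual F L))
    (hσ : ∀ a b : ZMod 2, ∀ x ∈ g a, ∀ f : Module.Dual F L,
      (∀ y ∈ g (b + 1), f y = 0) →
      ∀ y : L, σ (ι x) f y = - sgn F (a * b) * f (br x y))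
    -- `ψ` is a homogeneous superderivation of parity `pψ` from `L` into `L*`:
    (pψ : ZMod 2) (ψ : L →ₗ[F] Module.Dual F L)
    (hψg : ∀ a : ZMod 2, ∀ x ∈ g a, ∀ y ∈ g (a + pψ + 1), ψ x y = 0)
    (hLeib : ∀ a b : ZMod 2, ∀ x ∈ g a, ∀ y ∈ g b,
      ψ (br x y) = sgn F (pψ * a) • σ (ι x) (ψ y)
                 - sgn F ((pψ + a) * b) • σ (ι y) (ψ x))
    (x : L) (hx : x ∈ g 0)
    (hcentral : ∀ u : U, ι x ^ p ^ t * u = u * ι x ^ p ^ t) :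
    σ (ι x ^ (p ^ t - 1)) (ψ x) = 0 := by
  have hcoad : ∀ a, ∀ u ∈ g a, IsCoadjointAction g br a u (σ (ι u)) :=
    fun a u hu b f hf => hσ a b u hu f ((Submodule.mem_dualAnnihilator f).1 hf)
  have hA : br x ^ p ^ t = 0 :=
    bracket_pow_char_eq_zero_of_central hp hg hbrg hskew hsimple hnonab hι hcoad hx hcentral
  have hD : σ (ι x) = LinearMap.lcomp F F (-br x) := (hcoad 0 x hx).eq_lcomp_neg hg
  have hT : LinearMap.homAction (σ (ι x)) (br x) ^ p ^ t = 0 := by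
    rw [LinearMap.homAction_pow_char hp, hD, LinearMap.lcomp_pow, neg_pow, hA, mul_zero]
    ext
    simp
  have hψx : ψ x ∈ (g (pψ + 1)).dualAnnihilator :=
    (Submodule.mem_dualAnnihilator _).2 fun y hy => hψg 0 x hx y (by simpa using hy)
  have hE : (σ (ι x) ^ (p ^ t - 1)) (ψ x) ∈ (g (pψ + 1)).dualAnnihilator := by
    rw [Module.End.coe_pow]
    exact ((hcoad 0 x hx).mapsTo_dualAnnihilator hbrg hx pψ).iterate _ hψx
  have hinv : ∀ b, ∀ u ∈ g b, σ (ι u) ((σ (ι x) ^ (p ^ t - 1)) (ψ x)) = 0 := fun b u hu => by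
    rw [AlgHom.apply_pow_apply_eq_homAction_pow_apply σ ι (mapsTo_bracket_of_mem_zero hbrg hx b)
        (fun v hv => map_bracket_of_mem_zero hι hx hv)
        (fun v hv => apply_eq_sgn_smul_homAction hskew (fun v => σ (ι v)) pψ hLeib hx hv) _ u hu,
      map_smul, ← Module.End.mul_apply, ← pow_succ,
      Nat.sub_add_cancel (Nat.one_le_pow _ _ hp.pos), hT]
    simp
  rw [map_pow]
  exact eq_zero_of_forall_coadjoint_apply_eq_zero hg hsimple hnonab hcoad hE hinv

/-- Let `L` be a finite-dimensional simple Lie superalgebra, `U = U(L)` its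
universal enveloping algebra, `L*` the dual module (a `U`-module via `σ`
restricting to the coadjoint action), `ψ : L → L*` a homogeneous superderivation
and `x ∈ L₀` an even element such that `x^{p^t}` is central in `U(L)`.  Then
`x^{p^t - 1} · ψ(x) = 0`. -/
theorem stmt7 (p t : ℕ) (hp : p.Prime)
    (F : Type*) [Field F] [CharP F p]
    (L : Type*) [AddCommGroup L] [Module F L] [Module.Finite F L]
    (U : Type*) [Ring U] [Algebra F U]
    (g : ZMod 2 → Submodule F L) (br : L →ₗ[F] L →ₗ[F] L)
    (hg : DirectSum.IsInternal g)
    (hbrg : ∀ a b : ZMod 2, ∀ x ∈ g a, ∀ y ∈ g b, br x y ∈ g (a + b))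
    (hskew : ∀ a b : ZMod 2, ∀ x ∈ g a, ∀ y ∈ g b,
      br x y = - sgn F (a * b) • br y x)
    (hjac : ∀ a b : ZMod 2, ∀ x ∈ g a, ∀ y ∈ g b, ∀ z : L,
      br x (br y z) = br (br x y) z + sgn F (a * b) • br y (br x z))
    (hsimple : ∀ I : Submodule F L, (∀ x y : L, y ∈ I → br x y ∈ I) → I = ⊥ ∨ I = ⊤)
    (hnonab : br ≠ 0)
    -- `(U, ι)` is the universal enveloping algebra of `L`:
    (ι : L →ₗ[F] U)
    (hι : ∀ a b : ZMod 2, ∀ x ∈ g a, ∀ y ∈ g b,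
      ι (br x y) = ι x * ι y - sgn F (a * b) • (ι y * ι x))
    (huniv : ∀ (A : Type*) [Ring A] [Algebra F A] (jmap : L →ₗ[F] A),
      (∀ a b : ZMod 2, ∀ x ∈ g a, ∀ y ∈ g b,
        jmap (br x y) = jmap x * jmap y - sgn F (a * b) • (jmap y * jmap x)) →
      ∃! φ : U →ₐ[F] A, ∀ x : L, φ (ι x) = jmap x)
    -- the dual module `L*` is a `U`-module restricting to the coadjoint action:
    (σ : U →ₐ[F] Module.End F (Module.Dual F L))
    (hσ : ∀ a b : ZMod 2, ∀ x ∈ g a, ∀ f : Module.Dual F L,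
      (∀ y ∈ g (b + 1), f y = 0) →
      ∀ y : L, σ (ι x) f y = - sgn F (a * b) * f (br x y))
    -- `ψ` is a homogeneous superderivation of parity `pψ` from `L` into `L*`:
    (pψ : ZMod 2) (ψ : L →ₗ[F] Module.Dual F L)
    (hψg : ∀ a : ZMod 2, ∀ x ∈ g a, ∀ y ∈ g (a + pψ + 1), ψ x y = 0)
    (hLeib : ∀ a b : ZMod 2, ∀ x ∈ g a, ∀ y ∈ g b,
      ψ (br x y) = sgn F (pψ * a) • σ (ι x) (ψ y)
                 - sgn F ((pψ + a) * b) • σ (ι y) (ψ x))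
    (x : L) (hx : x ∈ g 0)
    (hcentral : ∀ u : U, ι x ^ p ^ t * u = u * ι x ^ p ^ t) :
    σ (ι x ^ (p ^ t - 1)) (ψ x) = 0 :=
  stmt7_general p t hp F L U g br hg hbrg hskew hsimple hnonab ι hι σ hσ pψ ψ hψg hLeib x hx
    hcentral
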